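/- arXiv:2012.12239 — 7 statements merged into one kernel-verified Lean document; each statement's English description precedes it below -/
import Mathlib

section
/- Let R, S be commutative rings with ring homomorphisms π₁, π₂ : R → S, and let M ⊆ R^p be a submodule generated by {h_1, ..., h_r}. Suppose there exist z_1, ..., z_n ∈ R such that the ideal generated by {π₁(z_i) − π₂(z_i) : 1 ≤ i ≤ n} contains π₁(α) − π₂(α) for every α ∈ R. Then the S-submodule M_D of S^{2p} generated by {h_D : h ∈ M} is generated by the finite set {(h_1)_D, ..., (h_r)_D} ∪ {(0, (π₁(z_i) − π₂(z_i))·π₂^p(h_j)) : 1 ≤ i ≤ n, 1 ≤ j ≤ r}. -/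
/-- the double `M_D` of a module `M` generated by `h_1,…,h_r` is generated by
the `(h_j)_D` together with the elements `(0, (π₁(z_i) − π₂(z_i))·π₂∘h_j)`, provided every
difference `π₁(α) − π₂(α)` lies in the ideal generated by the `π₁(z_i) − π₂(z_i)`. -/
theorem stmt2 {R S : Type*} [CommRing R] [CommRing S] (p r n : ℕ) (π₁ π₂ : R →+* S)
    (z : Fin n → R) (h : Fin r → Fin p → R)
    (hz : ∀ α : R, π₁ α - π₂ α ∈ Ideal.span (Set.range fun i => π₁ (z i) - π₂ (z i)))
    (hD : (Fin p → R) → (Fin p → S) × (Fin p → S))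
    (hDdef : ∀ v, hD v = (fun i => π₁ (v i), fun i => π₂ (v i))) :
    Submodule.span S (hD ''
        ((Submodule.span R (Set.range h) : Submodule R (Fin p → R)) : Set (Fin p → R))) =
      Submodule.span S ((Set.range fun j => hD (h j)) ∪
        (Set.range fun ji : Fin n × Fin r =>
          ((0 : Fin p → S), fun l => (π₁ (z ji.1) - π₂ (z ji.1)) * π₂ (h ji.2 l)))) := by
  set N := Submodule.span S ((Set.range fun j => hD (h j)) ∪
        (Set.range fun ji : Fin n × Fin r =>
          ((0 : Fin p → S), fun l => (π₁ (z ji.1) - π₂ (z ji.1)) * π₂ (h ji.2 l)))) with hN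
  set L := Submodule.span S (hD ''
        ((Submodule.span R (Set.range h) : Submodule R (Fin p → R)) : Set (Fin p → R))) with hL
  -- key lemma: for c in the ideal and x in the span, (0, c·π₂∘x) ∈ N
  have key : ∀ c ∈ Ideal.span (Set.range fun i => π₁ (z i) - π₂ (z i)),
      ∀ x ∈ Submodule.span R (Set.range h),
      (((0 : Fin p → S), fun l => c * π₂ (x l)) : (Fin p → S) × (Fin p → S)) ∈ N := by
    intro c hc
    induction hc using Submodule.span_induction with
    | mem c hc =>
      obtain ⟨i, rfl⟩ := hc
      intro x hx
      induction hx using Submodule.span_induction with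
      | mem x hx =>
        obtain ⟨j, rfl⟩ := hx
        exact Submodule.subset_span (Or.inr ⟨(i, j), rfl⟩)
      | zero =>
        have : (((0 : Fin p → S), fun l => (π₁ (z i) - π₂ (z i)) * π₂ ((0 : Fin p → R) l)) :
            (Fin p → S) × (Fin p → S)) = 0 := by
          refine Prod.ext rfl ?_
          funext l; simp
        rw [this]; exact N.zero_mem
      | add x y hx hy ihx ihy =>
        have : (((0 : Fin p → S), fun l => (π₁ (z i) - π₂ (z i)) * π₂ ((x + y) l)) :
            (Fin p → S) × (Fin p → S)) =
            ((0 : Fin p → S), fun l => (π₁ (z i) - π₂ (z i)) * π₂ (x l)) +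
            ((0 : Fin p → S), fun l => (π₁ (z i) - π₂ (z i)) * π₂ (y l)) := by
          refine Prod.ext (by simp) ?_
          funext l; simp [Pi.add_apply, mul_add]
        rw [this]; exact N.add_mem ihx ihy
      | smul β x hx ihx =>
        have : (((0 : Fin p → S), fun l => (π₁ (z i) - π₂ (z i)) * π₂ ((β • x) l)) :
            (Fin p → S) × (Fin p → S)) =
            π₂ β • (((0 : Fin p → S), fun l => (π₁ (z i) - π₂ (z i)) * π₂ (x l))) := by
          refine Prod.ext (by simp) ?_
          funext l; simp [Pi.smul_apply, smul_eq_mul]; ring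
        rw [this]; exact N.smul_mem _ ihx
    | zero =>
      intro x hx
      have : (((0 : Fin p → S), fun l => (0:S) * π₂ (x l)) :
          (Fin p → S) × (Fin p → S)) = 0 := by
        refine Prod.ext rfl ?_; funext l; simp
      rw [this]; exact N.zero_mem
    | add c d hc hd ihc ihd =>
      intro x hx
      have : (((0 : Fin p → S), fun l => (c + d) * π₂ (x l)) :
          (Fin p → S) × (Fin p → S)) =
          ((0 : Fin p → S), fun l => c * π₂ (x l)) +
          ((0 : Fin p → S), fun l => d * π₂ (x l)) := by
        refine Prod.ext (by simp) ?_; funext l; simp [add_mul]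
      rw [this]; exact N.add_mem (ihc x hx) (ihd x hx)
    | smul s c hc ihc =>
      intro x hx
      have : (((0 : Fin p → S), fun l => (s • c) * π₂ (x l)) :
          (Fin p → S) × (Fin p → S)) =
          s • (((0 : Fin p → S), fun l => c * π₂ (x l))) := by
        refine Prod.ext (by simp) ?_; funext l; simp [smul_eq_mul]; ring
      rw [this]; exact N.smul_mem _ (ihc x hx)
  apply le_antisymm
  · rw [hL, Submodule.span_le]
    rintro _ ⟨x, hx, rfl⟩
    induction hx using Submodule.span_induction with
    | mem x hx =>
      obtain ⟨j, rfl⟩ := hx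
      exact Submodule.subset_span (Or.inl ⟨j, rfl⟩)
    | zero =>
      have : hD 0 = 0 := by rw [hDdef]; refine Prod.ext ?_ ?_ <;> funext l <;> simp
      rw [this]; exact N.zero_mem
    | add x y hx hy ihx ihy =>
      have : hD (x + y) = hD x + hD y := by
        rw [hDdef, hDdef, hDdef]
        refine Prod.ext ?_ ?_ <;> funext l <;> simp
      rw [this]; exact N.add_mem ihx ihy
    | smul α x hx ihx =>
      have heq : hD (α • x) = π₁ α • hD x -
          ((0 : Fin p → S), fun l => (π₁ α - π₂ α) * π₂ (x l)) := by
        rw [hDdef, hDdef]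
        refine Prod.ext ?_ ?_ <;> funext l <;>
          simp [Pi.smul_apply, smul_eq_mul] <;> ring
      rw [heq]
      exact N.sub_mem (N.smul_mem _ ihx) (key _ (hz α) x hx)
  · rw [hN, Submodule.span_le]
    rintro _ (⟨j, rfl⟩ | ⟨⟨i, j⟩, rfl⟩)
    · exact Submodule.subset_span ⟨h j, Submodule.subset_span ⟨j, rfl⟩, rfl⟩
    · have heq : (((0 : Fin p → S), fun l => (π₁ (z i) - π₂ (z i)) * π₂ (h j l)) :
          (Fin p → S) × (Fin p → S)) = π₁ (z i) • hD (h j) - hD (z i • h j) := by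
        rw [hDdef, hDdef]
        refine Prod.ext ?_ ?_ <;> funext l <;>
          simp [Pi.smul_apply, smul_eq_mul] <;> ring
      dsimp only
      rw [heq]
      exact L.sub_mem
        (L.smul_mem _ (Submodule.subset_span ⟨h j, Submodule.subset_span ⟨j, rfl⟩, rfl⟩))
        (Submodule.subset_span ⟨z i • h j,
          Submodule.smul_mem _ _ (Submodule.subset_span ⟨j, rfl⟩), rfl⟩)
end

section
/- Under the same hypotheses, M_D is also generated by {(h_1)_D, ..., (h_r)_D} ∪ {((π₁(z_i) − π₂(z_i))·π₁^p(h_j), 0) : 1 ≤ i ≤ n, 1 ≤ j ≤ r}, and also by {(h_1)_D, ..., (h_r)_D} ∪ {(z_i h_j)_D : 1 ≤ i ≤ n, 1 ≤ j ≤ r}. -/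
/-- under the same hypotheses as Statement 2, `M_D` is also generated by the
`(h_j)_D` together with `((π₁(z_i) − π₂(z_i))·π₁∘h_j, 0)`, and also by the `(h_j)_D`
together with the doubles `(z_i·h_j)_D`. -/
theorem stmt3 {R S : Type*} [CommRing R] [CommRing S] (p r n : ℕ) (π₁ π₂ : R →+* S)
    (z : Fin n → R) (h : Fin r → Fin p → R)
    (hz : ∀ α : R, π₁ α - π₂ α ∈ Ideal.span (Set.range fun i => π₁ (z i) - π₂ (z i)))
    (hD : (Fin p → R) → (Fin p → S) × (Fin p → S))
    (hDdef : ∀ v, hD v = (fun i => π₁ (v i), fun i => π₂ (v i))) :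
    (Submodule.span S (hD ''
        ((Submodule.span R (Set.range h) : Submodule R (Fin p → R)) : Set (Fin p → R))) =
      Submodule.span S ((Set.range fun j => hD (h j)) ∪
        (Set.range fun ji : Fin n × Fin r =>
          ((fun l => (π₁ (z ji.1) - π₂ (z ji.1)) * π₁ (h ji.2 l)), (0 : Fin p → S))))) ∧
    (Submodule.span S (hD ''
        ((Submodule.span R (Set.range h) : Submodule R (Fin p → R)) : Set (Fin p → R))) =
      Submodule.span S ((Set.range fun j => hD (h j)) ∪
        (Set.range fun ji : Fin n × Fin r => hD fun l => z ji.1 * h ji.2 l))) := by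
  have hDeq : hD = fun v => ((fun i => π₁ (v i), fun i => π₂ (v i)) :
      (Fin p → S) × (Fin p → S)) := funext hDdef
  subst hDeq
  set I := Ideal.span (Set.range fun i => π₁ (z i) - π₂ (z i)) with hI
  -- main lemma
  have main : ∀ (T : Submodule S ((Fin p → S) × (Fin p → S))),
      (∀ j, (((fun i => π₁ (h j i)), fun i => π₂ (h j i)) :
          (Fin p → S) × (Fin p → S)) ∈ T) →
      (∀ i j, (((fun l => (π₁ (z i) - π₂ (z i)) * π₁ (h j l)), (0 : Fin p → S)) :
          (Fin p → S) × (Fin p → S)) ∈ T) →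
      ∀ v ∈ Submodule.span R (Set.range h),
        ((((fun i => π₁ (v i)), fun i => π₂ (v i)) : (Fin p → S) × (Fin p → S)) ∈ T ∧
         ∀ s ∈ I, (((fun i => s * π₁ (v i)), (0 : Fin p → S)) :
            (Fin p → S) × (Fin p → S)) ∈ T) := by
    intro T hT1 hT2 v hv
    -- key: for s ∈ I and any w in span, (s * π₁ w, 0) -- first for generators
    have key : ∀ (w : Fin p → S),
        (∀ i, (((fun l => (π₁ (z i) - π₂ (z i)) * w l), (0 : Fin p → S)) :
          (Fin p → S) × (Fin p → S)) ∈ T) →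
        ∀ s ∈ I, (((fun l => s * w l), (0 : Fin p → S)) :
          (Fin p → S) × (Fin p → S)) ∈ T := by
      intro w hw s hs
      induction hs using Submodule.span_induction with
      | mem x hx =>
        obtain ⟨i, rfl⟩ := hx
        exact hw i
      | zero =>
        have : (((fun l => (0:S) * w l), (0 : Fin p → S)) :
            (Fin p → S) × (Fin p → S)) = 0 := by
          ext l <;> simp
        rw [this]; exact T.zero_mem
      | add x y hx hy ihx ihy =>
        have : (((fun l => (x + y) * w l), (0 : Fin p → S)) :
            (Fin p → S) × (Fin p → S)) =
            ((fun l => x * w l), (0 : Fin p → S)) + ((fun l => y * w l), (0 : Fin p → S)) := by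
          ext l <;> simp [add_mul]
        rw [this]; exact T.add_mem ihx ihy
      | smul a x hx ihx =>
        have : (((fun l => (a • x) * w l), (0 : Fin p → S)) :
            (Fin p → S) × (Fin p → S)) =
            a • ((fun l => x * w l), (0 : Fin p → S)) := by
          ext l <;> simp [smul_eq_mul, mul_assoc]
        rw [this]; exact T.smul_mem a ihx
    induction hv using Submodule.span_induction with
    | mem x hx =>
      obtain ⟨j, rfl⟩ := hx
      exact ⟨hT1 j, key _ (fun i => hT2 i j)⟩
    | zero =>
      constructor
      · have : (((fun i => π₁ ((0 : Fin p → R) i)), fun i => π₂ ((0 : Fin p → R) i)) :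
            (Fin p → S) × (Fin p → S)) = 0 := by ext i <;> simp
        rw [this]; exact T.zero_mem
      · intro s hs
        have : (((fun i => s * π₁ ((0 : Fin p → R) i)), (0 : Fin p → S)) :
            (Fin p → S) × (Fin p → S)) = 0 := by ext i <;> simp
        rw [this]; exact T.zero_mem
    | add x y hx hy ihx ihy =>
      constructor
      · have : (((fun i => π₁ ((x + y) i)), fun i => π₂ ((x + y) i)) :
            (Fin p → S) × (Fin p → S)) =
            ((fun i => π₁ (x i)), fun i => π₂ (x i)) +
            ((fun i => π₁ (y i)), fun i => π₂ (y i)) := by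
          ext i <;> simp
        rw [this]; exact T.add_mem ihx.1 ihy.1
      · intro s hs
        have : (((fun i => s * π₁ ((x + y) i)), (0 : Fin p → S)) :
            (Fin p → S) × (Fin p → S)) =
            ((fun i => s * π₁ (x i)), (0 : Fin p → S)) +
            ((fun i => s * π₁ (y i)), (0 : Fin p → S)) := by
          ext i <;> simp [mul_add]
        rw [this]; exact T.add_mem (ihx.2 s hs) (ihy.2 s hs)
    | smul c x hx ihx =>
      constructor
      · have : (((fun i => π₁ ((c • x) i)), fun i => π₂ ((c • x) i)) :
            (Fin p → S) × (Fin p → S)) =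
            π₂ c • ((fun i => π₁ (x i)), fun i => π₂ (x i)) +
            ((fun i => (π₁ c - π₂ c) * π₁ (x i)), (0 : Fin p → S)) := by
          ext i <;> simp [smul_eq_mul, map_mul] <;> ring
        rw [this]
        exact T.add_mem (T.smul_mem _ ihx.1) (ihx.2 _ (hz c))
      · intro s hs
        have : (((fun i => s * π₁ ((c • x) i)), (0 : Fin p → S)) :
            (Fin p → S) × (Fin p → S)) =
            π₁ c • ((fun i => s * π₁ (x i)), (0 : Fin p → S)) := by
          ext i <;> simp [smul_eq_mul, map_mul] <;> ring
        rw [this]; exact T.smul_mem _ (ihx.2 s hs)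
  -- the span of the image
  set MD := Submodule.span S ((fun v => ((fun i => π₁ (v i), fun i => π₂ (v i)) :
      (Fin p → S) × (Fin p → S))) ''
      ((Submodule.span R (Set.range h) : Submodule R (Fin p → R)) : Set (Fin p → R))) with hMD
  have himg : ∀ v ∈ Submodule.span R (Set.range h),
      (((fun i => π₁ (v i)), fun i => π₂ (v i)) : (Fin p → S) × (Fin p → S)) ∈ MD := by
    intro v hv
    exact Submodule.subset_span ⟨v, hv, rfl⟩
  -- generators of A in MD
  have hA2 : ∀ i j, (((fun l => (π₁ (z i) - π₂ (z i)) * π₁ (h j l)), (0 : Fin p → S)) :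
      (Fin p → S) × (Fin p → S)) ∈ MD := by
    intro i j
    have h1 : (((fun l => π₁ ((z i • h j) l)), fun l => π₂ ((z i • h j) l)) :
        (Fin p → S) × (Fin p → S)) ∈ MD :=
      himg _ (Submodule.smul_mem _ _ (Submodule.subset_span ⟨j, rfl⟩))
    have h2 : (((fun l => π₁ (h j l)), fun l => π₂ (h j l)) :
        (Fin p → S) × (Fin p → S)) ∈ MD :=
      himg _ (Submodule.subset_span ⟨j, rfl⟩)
    have heq : (((fun l => (π₁ (z i) - π₂ (z i)) * π₁ (h j l)), (0 : Fin p → S)) :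
        (Fin p → S) × (Fin p → S)) =
        ((fun l => π₁ ((z i • h j) l)), fun l => π₂ ((z i • h j) l)) -
        π₂ (z i) • ((fun l => π₁ (h j l)), fun l => π₂ (h j l)) := by
      ext l <;> simp [smul_eq_mul, map_mul] <;> ring
    rw [heq]
    exact MD.sub_mem h1 (MD.smul_mem _ h2)
  have hj_mem : ∀ j, (((fun l => π₁ (h j l)), fun l => π₂ (h j l)) :
      (Fin p → S) × (Fin p → S)) ∈ MD :=
    fun j => himg _ (Submodule.subset_span ⟨j, rfl⟩)
  constructor
  · apply le_antisymm
    · rw [Submodule.span_le]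
      rintro x ⟨v, hv, rfl⟩
      exact (main _ (fun j => Submodule.subset_span (Or.inl ⟨j, rfl⟩))
        (fun i j => Submodule.subset_span (Or.inr ⟨(i, j), rfl⟩)) v hv).1
    · rw [Submodule.span_le]
      rintro x (⟨j, rfl⟩ | ⟨⟨i, j⟩, rfl⟩)
      · exact hj_mem j
      · exact hA2 i j
  · apply le_antisymm
    · rw [Submodule.span_le]
      rintro x ⟨v, hv, rfl⟩
      refine (main _ (fun j => Submodule.subset_span (Or.inl ⟨j, rfl⟩)) (fun i j => ?_) v hv).1
      -- ((π₁ z i - π₂ z i) * π₁ h j, 0) ∈ span B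
      have hb1 : (((fun l => π₁ (z i * h j l)), fun l => π₂ (z i * h j l)) :
          (Fin p → S) × (Fin p → S)) ∈
          Submodule.span S ((Set.range fun j => (((fun l => π₁ (h j l)), fun l => π₂ (h j l)) :
            (Fin p → S) × (Fin p → S))) ∪
          (Set.range fun ji : Fin n × Fin r =>
            (((fun l => π₁ (z ji.1 * h ji.2 l)), fun l => π₂ (z ji.1 * h ji.2 l)) :
              (Fin p → S) × (Fin p → S)))) :=
        Submodule.subset_span (Or.inr ⟨(i, j), rfl⟩)
      have hb2 : (((fun l => π₁ (h j l)), fun l => π₂ (h j l)) :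
          (Fin p → S) × (Fin p → S)) ∈
          Submodule.span S ((Set.range fun j => (((fun l => π₁ (h j l)), fun l => π₂ (h j l)) :
            (Fin p → S) × (Fin p → S))) ∪
          (Set.range fun ji : Fin n × Fin r =>
            (((fun l => π₁ (z ji.1 * h ji.2 l)), fun l => π₂ (z ji.1 * h ji.2 l)) :
              (Fin p → S) × (Fin p → S)))) :=
        Submodule.subset_span (Or.inl ⟨j, rfl⟩)
      have heq : (((fun l => (π₁ (z i) - π₂ (z i)) * π₁ (h j l)), (0 : Fin p → S)) :
          (Fin p → S) × (Fin p → S)) =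
          ((fun l => π₁ (z i * h j l)), fun l => π₂ (z i * h j l)) -
          π₂ (z i) • ((fun l => π₁ (h j l)), fun l => π₂ (h j l)) := by
        ext l <;> simp [smul_eq_mul, map_mul] <;> ring
      rw [heq]
      exact Submodule.sub_mem _ hb1 (Submodule.smul_mem _ _ hb2)
    · rw [Submodule.span_le]
      rintro x (⟨j, rfl⟩ | ⟨⟨i, j⟩, rfl⟩)
      · exact hj_mem j
      · have : (z i • h j) = fun l => z i * h j l := by ext l; simp [smul_eq_mul]
        have := himg (fun l => z i * h j l) (this ▸ Submodule.smul_mem _ _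
          (Submodule.subset_span ⟨j, rfl⟩))
        exact this
end

section
/- Let R be a commutative ring, A = [M] a p × r matrix with columns g_1, ..., g_r, and z_1, ..., z_n, z_1', ..., z_n' ∈ R. Form the (2p) × (r + r·n) matrix [M_D] with block structure: top-left block A, top-right block 0, bottom-left block A' (A with entries replaced by their primed analogues via a second ring map), bottom-right blocks (z_i − z_i')·A' for i = 1, ..., n. Then for any t_1, ..., t_k ∈ {1,...,n} and any k × k submatrices M_{IJ} of A and M'_{KL} of A', the product (z_{t_1} − z_{t_1}')···(z_{t_k} − z_{t_k}')·det(M_{IJ})·det(M'_{KL}) lies in the ideal J_{2k}([M_D]) generated by all 2k × 2k minors of [M_D]. -/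
/-- The ideal of `m × m` minors of a matrix. -/
def Jmin {R : Type*} [CommRing R] {ρ σ : Type*} (m : ℕ) (B : Matrix ρ σ R) : Ideal R :=
  Ideal.span (Set.range fun fg : (Fin m → ρ) × (Fin m → σ) => (B.submatrix fg.1 fg.2).det)

/-- The doubled matrix `[M_D]`, with left columns `(a_j, a'_j)` and right columns
`(0, (z_i − z'_i)·a'_j)`. -/
def MD {S : Type*} [CommRing S] {p r n : ℕ} (A A' : Matrix (Fin p) (Fin r) S)
    (z z' : Fin n → S) : Matrix (Fin p ⊕ Fin p) (Fin r ⊕ Fin n × Fin r) S :=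
  Matrix.of fun rw cl =>
    match rw, cl with
    | Sum.inl i, Sum.inl j => A i j
    | Sum.inr i, Sum.inl j => A' i j
    | Sum.inl _, Sum.inr _ => 0
    | Sum.inr i, Sum.inr tj => (z tj.1 - z' tj.1) * A' i tj.2

/-- `(z_{t_1} − z'_{t_1})⋯(z_{t_k} − z'_{t_k})·det(M_{IJ})·det(M'_{KL})` lies in
the ideal of `2k × 2k` minors of the doubled matrix `[M_D]`. -/
theorem stmt6 {S : Type*} [CommRing S] (p r n k : ℕ) (A A' : Matrix (Fin p) (Fin r) S)
    (z z' : Fin n → S) (t : Fin k → Fin n) (I K : Fin k → Fin p) (J L : Fin k → Fin r) :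
    (∏ l, (z (t l) - z' (t l))) * ((A.submatrix I J).det * (A'.submatrix K L).det) ∈
      Jmin (2 * k) (MD A A' z z') := by
  classical
  set e : Fin (2 * k) ≃ Fin k ⊕ Fin k := (finCongr (two_mul k)).trans finSumFinEquiv.symm with he
  set f : Fin (2 * k) → Fin p ⊕ Fin p := Sum.map I K ∘ e with hf
  set g : Fin (2 * k) → Fin r ⊕ Fin n × Fin r := (Sum.map J fun l => (t l, L l)) ∘ e with hg
  have key : ((MD A A' z z').submatrix f g).det =
      (∏ l, (z (t l) - z' (t l))) * ((A.submatrix I J).det * (A'.submatrix K L).det) := by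
    have h1 : (MD A A' z z').submatrix f g =
        (Matrix.fromBlocks (A.submatrix I J) 0 (A'.submatrix K J)
          ((A'.submatrix K L) * Matrix.diagonal fun l => z (t l) - z' (t l))).submatrix e e := by
      ext a b
      rcases ha : e a with i | i <;> rcases hb : e b with j | j <;>
        simp [hf, hg, ha, hb, MD, Matrix.mul_diagonal, mul_comm]
    rw [h1, Matrix.det_submatrix_equiv_self, Matrix.det_fromBlocks_zero₁₂,
      Matrix.det_mul, Matrix.det_diagonal]
    ring
  rw [← key]
  exact Ideal.subset_span ⟨(f, g), rfl⟩
end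

section
/- With notation as above, let I_Δ denote the ideal of S generated by {z_i − z_i' : 1 ≤ i ≤ n}. Then I_Δ^k · J_2([(J_k(M))_D]) ⊆ J_{2k}([M_D]), where [(J_k(M))_D] is the 2 × N matrix whose columns are (det M_{IJ}, det M'_{IJ}) over all k-minors together with (0, (z_i − z_i')·det M'_{KL}) over all i and all k-minors. -/
/-- The `2`-row matrix `[(J_k(M))_D]` presenting the double of the ideal of `k × k` minors:
its columns are `(det M_{IJ}, det M'_{IJ})` over all `k`-minor indices, together with
`(0, (z_i − z'_i)·det M'_{KL})`. -/
def JkD {S : Type*} [CommRing S] {p r n : ℕ} (k : ℕ) (A A' : Matrix (Fin p) (Fin r) S)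
    (z z' : Fin n → S) :
    Matrix (Fin 2)
      (((Fin k → Fin p) × (Fin k → Fin r)) ⊕ Fin n × ((Fin k → Fin p) × (Fin k → Fin r))) S :=
  Matrix.of fun rw cl =>
    match cl with
    | Sum.inl IJ =>
        if rw = 0 then (A.submatrix IJ.1 IJ.2).det else (A'.submatrix IJ.1 IJ.2).det
    | Sum.inr iKL =>
        if rw = 0 then 0 else (z iKL.1 - z' iKL.1) * (A'.submatrix iKL.2.1 iKL.2.2).det


lemma pow_span_le {R ι : Type*} [CommRing R] (g : ι → R) (k : ℕ) :
    (Ideal.span (Set.range g)) ^ k ≤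
      Ideal.span (Set.range fun f : Fin k → ι => ∏ t, g (f t)) := by
  induction k with
  | zero =>
      have h1 : (1 : R) ∈ Ideal.span (Set.range fun f : Fin 0 → ι => ∏ t, g (f t)) :=
        Ideal.subset_span ⟨fun t => t.elim0, by simp⟩
      rw [pow_zero, Ideal.one_eq_top]
      exact le_of_eq ((Ideal.eq_top_iff_one _).mpr h1).symm
  | succ k ih =>
      rw [pow_succ']
      refine le_trans (Ideal.mul_mono le_rfl ih) ?_
      rw [Ideal.span_mul_span', Ideal.span_le]
      rintro x hx
      rw [Set.mem_mul] at hx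
      obtain ⟨a, ⟨i, rfl⟩, b, ⟨fb, rfl⟩, rfl⟩ := hx
      exact Ideal.subset_span ⟨Fin.cons i fb, by simp [Fin.prod_univ_succ]⟩

lemma key_mem {S : Type*} [CommRing S] {p r n : ℕ} {k : ℕ} (A A' : Matrix (Fin p) (Fin r) S)
    (z z' : Fin n → S) (f : Fin k → Fin n) (I : Fin k → Fin p) (J : Fin k → Fin r)
    (K : Fin k → Fin p) (L : Fin k → Fin r) :
    (∏ t, (z (f t) - z' (f t))) * ((A.submatrix I J).det * (A'.submatrix K L).det)
      ∈ Jmin (2 * k) (MD A A' z z') := by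
  classical
  let e : Fin k ⊕ Fin k ≃ Fin (2 * k) := finSumFinEquiv.trans (finCongr (two_mul k).symm)
  let ρ : Fin (2 * k) → Fin p ⊕ Fin p := Sum.elim (Sum.inl ∘ I) (Sum.inr ∘ K) ∘ e.symm
  let γ : Fin (2 * k) → Fin r ⊕ Fin n × Fin r :=
    Sum.elim (Sum.inl ∘ J) (fun t => Sum.inr (f t, L t)) ∘ e.symm
  have hgen : ((MD A A' z z').submatrix ρ γ).det ∈ Jmin (2 * k) (MD A A' z z') :=
    Ideal.subset_span ⟨(ρ, γ), rfl⟩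
  have hB : (MD A A' z z').submatrix (Sum.elim (Sum.inl ∘ I) (Sum.inr ∘ K))
      (Sum.elim (Sum.inl ∘ J) (fun t => Sum.inr (f t, L t)))
      = Matrix.fromBlocks (A.submatrix I J) 0 (A'.submatrix K J)
          ((A'.submatrix K L) * Matrix.diagonal (fun t => z (f t) - z' (f t))) := by
    ext i j
    cases i <;> cases j <;>
      simp [MD, Matrix.fromBlocks, Matrix.mul_diagonal, mul_comm]
  have hdet : ((MD A A' z z').submatrix ρ γ).det
      = (∏ t, (z (f t) - z' (f t))) * ((A.submatrix I J).det * (A'.submatrix K L).det) := by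
    have h1 : (MD A A' z z').submatrix ρ γ
        = ((MD A A' z z').submatrix (Sum.elim (Sum.inl ∘ I) (Sum.inr ∘ K))
            (Sum.elim (Sum.inl ∘ J) (fun t => Sum.inr (f t, L t)))).submatrix e.symm e.symm :=
      rfl
    rw [h1, hB, Matrix.det_submatrix_equiv_self, Matrix.det_fromBlocks_zero₁₂,
      Matrix.det_mul, Matrix.det_diagonal]
    ring
  rwa [hdet] at hgen

lemma mixed_mem {S : Type*} [CommRing S] {p r n : ℕ} {k : ℕ} (A A' : Matrix (Fin p) (Fin r) S)
    (z z' : Fin n → S) (f : Fin k → Fin n)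
    (c c' : ((Fin k → Fin p) × (Fin k → Fin r)) ⊕ Fin n × ((Fin k → Fin p) × (Fin k → Fin r))) :
    (∏ t, (z (f t) - z' (f t))) * (JkD k A A' z z' 0 c * JkD k A A' z z' 1 c')
      ∈ Jmin (2 * k) (MD A A' z z') := by
  cases c with
  | inr iKL =>
      have h : JkD k A A' z z' 0 (Sum.inr iKL) = 0 := by simp [JkD]
      rw [h, zero_mul, mul_zero]
      exact Ideal.zero_mem _
  | inl IJ =>
      cases c' with
      | inl KL =>
          have h := key_mem A A' z z' f IJ.1 IJ.2 KL.1 KL.2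
          simpa [JkD] using h
      | inr iKL =>
          have h := key_mem A A' z z' f IJ.1 IJ.2 iKL.2.1 iKL.2.2
          have h2 := Ideal.mul_mem_left _ (z iKL.1 - z' iKL.1) h
          have heq : (z iKL.1 - z' iKL.1) *
              ((∏ t, (z (f t) - z' (f t))) *
                ((A.submatrix IJ.1 IJ.2).det * (A'.submatrix iKL.2.1 iKL.2.2).det))
              = (∏ t, (z (f t) - z' (f t))) *
                (JkD k A A' z z' 0 (Sum.inl IJ) * JkD k A A' z z' 1 (Sum.inr iKL)) := by
            simp [JkD]
            ring
          rwa [heq] at h2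

/-- `I_Δ^k · J_2([(J_k(M))_D]) ⊆ J_{2k}([M_D])`. -/
theorem stmt7 {S : Type*} [CommRing S] (p r n k : ℕ) (A A' : Matrix (Fin p) (Fin r) S)
    (z z' : Fin n → S) :
    (Ideal.span (Set.range fun i => z i - z' i)) ^ k * Jmin 2 (JkD k A A' z z') ≤
      Jmin (2 * k) (MD A A' z z') := by
  classical
  refine le_trans (Ideal.mul_mono (pow_span_le (fun i => z i - z' i) k) le_rfl) ?_
  rw [show Jmin 2 (JkD k A A' z z') = Ideal.span (Set.range fun fg :
      (Fin 2 → Fin 2) × (Fin 2 → ((Fin k → Fin p) × (Fin k → Fin r)) ⊕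
        Fin n × ((Fin k → Fin p) × (Fin k → Fin r))) =>
      ((JkD k A A' z z').submatrix fg.1 fg.2).det) from rfl,
    Ideal.span_mul_span', Ideal.span_le]
  rintro x hx
  rw [Set.mem_mul] at hx
  obtain ⟨a, ⟨f, rfl⟩, b, ⟨⟨rw2, cl2⟩, rfl⟩, rfl⟩ := hx
  dsimp only
  rw [Matrix.det_fin_two]
  simp only [Matrix.submatrix_apply]
  have hfin : ∀ i : Fin 2, i = 0 ∨ i = 1 := by decide
  rcases hfin (rw2 0) with h0 | h0 <;> rcases hfin (rw2 1) with h1 | h1 <;> rw [h0, h1]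
  · have hz : (∏ t, (z (f t) - z' (f t))) *
        (JkD k A A' z z' 0 (cl2 0) * JkD k A A' z z' 0 (cl2 1) -
          JkD k A A' z z' 0 (cl2 1) * JkD k A A' z z' 0 (cl2 0)) = 0 := by ring
    rw [hz]; exact Ideal.zero_mem _
  · rw [mul_sub]
    exact sub_mem (mixed_mem A A' z z' f (cl2 0) (cl2 1))
      (mixed_mem A A' z z' f (cl2 1) (cl2 0))
  · have hz : (∏ t, (z (f t) - z' (f t))) *
        (JkD k A A' z z' 1 (cl2 0) * JkD k A A' z z' 0 (cl2 1) -
          JkD k A A' z z' 1 (cl2 1) * JkD k A A' z z' 0 (cl2 0))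
        = (∏ t, (z (f t) - z' (f t))) *
            (JkD k A A' z z' 0 (cl2 1) * JkD k A A' z z' 1 (cl2 0)) -
          (∏ t, (z (f t) - z' (f t))) *
            (JkD k A A' z z' 0 (cl2 0) * JkD k A A' z z' 1 (cl2 1)) := by ring
    rw [hz]
    exact sub_mem (mixed_mem A A' z z' f (cl2 1) (cl2 0))
      (mixed_mem A A' z z' f (cl2 0) (cl2 1))
  · have hz : (∏ t, (z (f t) - z' (f t))) *
        (JkD k A A' z z' 1 (cl2 0) * JkD k A A' z z' 1 (cl2 1) -
          JkD k A A' z z' 1 (cl2 1) * JkD k A A' z z' 1 (cl2 0)) = 0 := by ring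
    rw [hz]; exact Ideal.zero_mem _
end

section
/- With notation as above, if the ideal J_k(A) of k × k minors of A is generated by the single minor g = det(M_{IJ}), then I_Δ^{k−1} · J_2([(J_k(M))_D]) ⊆ J_{2k}([M_D]), where in this case J_2([(J_k(M))_D]) is the ideal generated by {g·g'·(z_i − z_i') : 1 ≤ i ≤ n} with g' = det(M'_{IJ}). -/
/-!
Take the rows `I` in both halves of `[M_D]`, the columns `J` of the left block, and in the
right block the columns `(c t, J t)`. The resulting `2k × 2k` submatrix is block lower
triangular with diagonal blocks `A_{IJ}` and `A'_{IJ} · diag(z_{c t} − z'_{c t})`, so its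
determinant is `g · g' · ∏ₜ (z_{c t} − z'_{c t})`. As `c` ranges over all `k`-tuples, these
minors generate `g g' I_Δ^k`, and `I_Δ^{k−1} · (g g' I_Δ) ≤ g g' I_Δ^k` (also for `k = 0`).
-/

lemma Ideal.span_range_pow_le {R ι : Type*} [CommRing R] (v : ι → R) :
    ∀ m, Ideal.span (Set.range v) ^ m ≤
      Ideal.span (Set.range fun c : Fin m → ι => ∏ t, v (c t))
  | 0 => by
    rw [pow_zero, Ideal.one_eq_top, top_le_iff, Ideal.eq_top_iff_one]
    exact Ideal.subset_span ⟨Fin.elim0, Fintype.prod_empty _⟩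
  | m + 1 => by
    rw [pow_succ]
    refine (Ideal.mul_mono_left (Ideal.span_range_pow_le v m)).trans ?_
    rw [Ideal.span_mul_span', Ideal.span_le]
    rintro _ ⟨_, ⟨c, rfl⟩, _, ⟨i, rfl⟩, rfl⟩
    exact Ideal.subset_span ⟨Fin.snoc c i, by simp [Fin.prod_univ_castSucc]⟩

lemma det_submatrix_mem_Jmin {R ρ σ ι : Type*} [CommRing R] [Fintype ι] [DecidableEq ι]
    {m : ℕ} (B : Matrix ρ σ R) (e : Fin m ≃ ι) (f : ι → ρ) (g : ι → σ) :
    (B.submatrix f g).det ∈ Jmin m B :=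
  Ideal.subset_span ⟨(f ∘ e, g ∘ e), Matrix.det_submatrix_equiv_self e (B.submatrix f g)⟩

section MD

variable {S : Type*} [CommRing S] {p r n k : ℕ} (A A' : Matrix (Fin p) (Fin r) S)
  (z z' : Fin n → S) (I : Fin k → Fin p) (J : Fin k → Fin r) (c : Fin k → Fin n)

lemma MD_submatrix_eq_fromBlocks :
    (MD A A' z z').submatrix (Sum.elim (Sum.inl ∘ I) (Sum.inr ∘ I))
        (Sum.elim (Sum.inl ∘ J) (Sum.inr ∘ fun t => (c t, J t))) =
      Matrix.fromBlocks (A.submatrix I J) 0 (A'.submatrix I J)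
        (A'.submatrix I J * Matrix.diagonal fun t => z (c t) - z' (c t)) := by
  ext (i | i) (j | j) <;> simp [MD, Matrix.mul_diagonal, mul_comm]

lemma det_mul_det_mul_prod_mem_Jmin_MD :
    (A.submatrix I J).det * (A'.submatrix I J).det * ∏ t, (z (c t) - z' (c t)) ∈
      Jmin (2 * k) (MD A A' z z') := by
  have hdet := congrArg Matrix.det (MD_submatrix_eq_fromBlocks A A' z z' I J c)
  rw [Matrix.det_fromBlocks_zero₁₂, Matrix.det_mul, Matrix.det_diagonal, ← mul_assoc] at hdet
  rw [← hdet]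
  exact det_submatrix_mem_Jmin _ ((finCongr (two_mul k)).trans finSumFinEquiv.symm) _ _

lemma span_singleton_mul_pow_le_Jmin_MD :
    Ideal.span {(A.submatrix I J).det * (A'.submatrix I J).det} *
        Ideal.span (Set.range fun i => z i - z' i) ^ k ≤
      Jmin (2 * k) (MD A A' z z') := by
  refine (Ideal.mul_mono_right (Ideal.span_range_pow_le _ k)).trans ?_
  rw [Ideal.span_mul_span', Ideal.span_le]
  rintro _ ⟨_, rfl, _, ⟨c, rfl⟩, rfl⟩
  exact det_mul_det_mul_prod_mem_Jmin_MD A A' z z' I J c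

end MD

theorem stmt8_general {S : Type*} [CommRing S] (p r n k : ℕ) (A A' : Matrix (Fin p) (Fin r) S)
    (z z' : Fin n → S) (I : Fin k → Fin p) (J : Fin k → Fin r) :
    (Ideal.span (Set.range fun i => z i - z' i)) ^ (k - 1) *
        Ideal.span (Set.range fun i =>
          (A.submatrix I J).det * ((A'.submatrix I J).det * (z i - z' i))) ≤
      Jmin (2 * k) (MD A A' z z') := by
  set IΔ := Ideal.span (Set.range fun i => z i - z' i)
  set gg' := (A.submatrix I J).det * (A'.submatrix I J).det
  have hspan : Ideal.span (Set.range fun i =>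
      (A.submatrix I J).det * ((A'.submatrix I J).det * (z i - z' i))) ≤
        Ideal.span {gg'} * IΔ := by
    rw [Ideal.span_le]
    rintro _ ⟨i, rfl⟩
    exact Ideal.mem_span_singleton_mul.mpr ⟨_, Ideal.subset_span ⟨i, rfl⟩, mul_assoc ..⟩
  calc IΔ ^ (k - 1) * _ ≤ IΔ ^ (k - 1) * (Ideal.span {gg'} * IΔ) := Ideal.mul_mono_right hspan
    _ = Ideal.span {gg'} * IΔ ^ (k - 1 + 1) := by rw [pow_succ]; ring
    _ ≤ Ideal.span {gg'} * IΔ ^ k := Ideal.mul_mono_right (Ideal.pow_le_pow_right (by omega))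
    _ ≤ Jmin (2 * k) (MD A A' z z') := span_singleton_mul_pow_le_Jmin_MD A A' z z' I J

/-- if `J_k(A)` is principal, generated by the single minor `g = det(M_{IJ})`,
then `I_Δ^{k−1} · J_2([(J_k(M))_D]) ⊆ J_{2k}([M_D])`, where in this case
`J_2([(J_k(M))_D])` is generated by the `g·g'·(z_i − z'_i)`, with `g' = det(M'_{IJ})`. -/
theorem stmt8 {S : Type*} [CommRing S] (p r n k : ℕ) (A A' : Matrix (Fin p) (Fin r) S)
    (z z' : Fin n → S) (I : Fin k → Fin p) (J : Fin k → Fin r)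
    (hprin : Jmin k A = Ideal.span {(A.submatrix I J).det}) :
    (Ideal.span (Set.range fun i => z i - z' i)) ^ (k - 1) *
        Ideal.span (Set.range fun i =>
          (A.submatrix I J).det * ((A'.submatrix I J).det * (z i - z' i))) ≤
      Jmin (2 * k) (MD A A' z z') :=
  stmt8_general p r n k A A' z z' I J
end

section
/- Let X be a complex analytic germ, M a submodule of O_{X,x}^p, and suppose every Lipschitz-coefficient combination is controlled as follows: if h ∈ R^p can be written h = Σ_i α_i h_i where h_1, ..., h_r generate M and each α_i : X → C is a (locally bounded) Lipschitz function with respect to coordinates z_1,...,z_n, then for every linear functional φ on C^{2p} and all (z, z') near (x, x'), |φ(h_D(z,z'))| ≤ C · sup over the generators s of M_D of |φ(s(z,z'))|, where the generators of M_D are the (h_i)_D together with (0, (z_j(z) − z_j(z'))·h_i(z')). In particular h_D lies in the integral closure of M_D at (x, x'). -/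
/-- core estimate of the Necessity Theorem: if `h = ∑ αᵢ·hᵢ` with the `αᵢ`
locally bounded (by `D`) and Lipschitz (with constant `C₀`) with respect to the coordinates
`z₁,…,z_n`, then for every linear functional `φ` on `ℂ^{2p}` there is a constant `C > 0`
such that `‖φ(h_D(z,z'))‖ ≤ C · sup_s ‖φ(s(z,z'))‖`, the sup being over the generators
`(hᵢ)_D` and `(0, (z_j(z) − z_j(z'))·hᵢ(z'))` of `M_D`.  In particular `h_D ∈ closure(M_D)`. -/
theorem stmt12 (p n r : ℕ) (X : Type*) (z : X → Fin n → ℂ)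
    (hg : Fin r → X → Fin p → ℂ) (α : Fin r → X → ℂ) (h : X → Fin p → ℂ)
    (hh : ∀ w, h w = ∑ i, α i w • hg i w)
    (C₀ D : ℝ)
    (hbound : ∀ i w, ‖α i w‖ ≤ D)
    (hlip : ∀ (i : Fin r) (w w' : X) (t : ℝ),
      (∀ j, ‖z w j - z w' j‖ ≤ t) → ‖α i w - α i w'‖ ≤ C₀ * t)
    (φ : ((Fin p → ℂ) × (Fin p → ℂ)) →ₗ[ℂ] ℂ) :
    ∃ C > (0 : ℝ), ∀ (w w' : X) (Bnd : ℝ), 0 ≤ Bnd →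
      (∀ i : Fin r, ‖φ (hg i w, hg i w')‖ ≤ Bnd) →
      (∀ (j : Fin n) (i : Fin r),
        ‖φ ((0 : Fin p → ℂ), (z w j - z w' j) • hg i w')‖ ≤ Bnd) →
      ‖φ (h w, h w')‖ ≤ C * Bnd := by
  refine ⟨r * (|D| + |C₀|) + 1, by positivity, ?_⟩
  intro w w' Bnd hB h1 h2
  -- decomposition of φ(h w, h w')
  have hpair : ((h w, h w') : (Fin p → ℂ) × (Fin p → ℂ))
      = ∑ i, ((α i w) • ((hg i w, hg i w') : (Fin p → ℂ) × (Fin p → ℂ))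
          + (α i w' - α i w) • (((0 : Fin p → ℂ), hg i w'))) := by
    rw [hh w, hh w']
    ext k <;>
      simp [Prod.fst_sum, Prod.snd_sum, Finset.sum_apply, smul_smul, sub_smul,
        Pi.smul_apply, smul_eq_mul]
  have hφ : φ (h w, h w')
      = ∑ i, ((α i w) * φ (hg i w, hg i w')
          + (α i w' - α i w) * φ ((0 : Fin p → ℂ), hg i w')) := by
    rw [hpair, map_sum]
    apply Finset.sum_congr rfl
    intro i _
    rw [map_add, map_smul, map_smul, smul_eq_mul, smul_eq_mul]
  rw [hφ]
  have key : ∀ i : Fin r,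
      ‖(α i w) * φ (hg i w, hg i w')
        + (α i w' - α i w) * φ ((0 : Fin p → ℂ), hg i w')‖ ≤ (|D| + |C₀|) * Bnd := by
    intro i
    have hφ0 : (0 : ℝ) ≤ ‖φ ((0 : Fin p → ℂ), hg i w')‖ := norm_nonneg _
    have t1 : ‖(α i w) * φ (hg i w, hg i w')‖ ≤ |D| * Bnd := by
      rw [norm_mul]
      exact mul_le_mul ((hbound i w).trans (le_abs_self D)) (h1 i) (norm_nonneg _)
        (abs_nonneg D)
    have t2 : ‖(α i w' - α i w) * φ ((0 : Fin p → ℂ), hg i w')‖ ≤ |C₀| * Bnd := by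
      rw [norm_mul]
      rcases isEmpty_or_nonempty (Fin n) with hn | hn
      · have := hlip i w' w 0 (fun j => hn.elim j)
        have hz : ‖α i w' - α i w‖ = 0 := le_antisymm (by simpa using this) (norm_nonneg _)
        rw [hz, zero_mul]
        positivity
      · have hne : (Finset.univ : Finset (Fin n)).Nonempty := Finset.univ_nonempty
        set t := Finset.univ.sup' hne (fun j => ‖z w j - z w' j‖) with ht
        obtain ⟨j0, -, hj0⟩ := Finset.exists_mem_eq_sup' hne (fun j => ‖z w j - z w' j‖)
        have hle : ∀ j, ‖z w j - z w' j‖ ≤ t := fun j =>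
          Finset.le_sup' (fun j => ‖z w j - z w' j‖) (Finset.mem_univ j)
        have hdiff : ‖α i w' - α i w‖ ≤ C₀ * t := by
          rw [norm_sub_rev]; exact hlip i w w' t hle
        have htφ : t * ‖φ ((0 : Fin p → ℂ), hg i w')‖ ≤ Bnd := by
          have hsc : φ ((0 : Fin p → ℂ), (z w j0 - z w' j0) • hg i w')
              = (z w j0 - z w' j0) * φ ((0 : Fin p → ℂ), hg i w') := by
            have : (((0 : Fin p → ℂ), (z w j0 - z w' j0) • hg i w')
                : (Fin p → ℂ) × (Fin p → ℂ))
                = (z w j0 - z w' j0) • (((0 : Fin p → ℂ), hg i w')) := by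
              ext k <;> simp
            rw [this, map_smul, smul_eq_mul]
          have := h2 j0 i
          rw [hsc, norm_mul] at this
          calc t * ‖φ ((0 : Fin p → ℂ), hg i w')‖
              = ‖z w j0 - z w' j0‖ * ‖φ ((0 : Fin p → ℂ), hg i w')‖ := by rw [ht.trans hj0]
            _ ≤ Bnd := this
        calc ‖α i w' - α i w‖ * ‖φ ((0 : Fin p → ℂ), hg i w')‖
            ≤ (C₀ * t) * ‖φ ((0 : Fin p → ℂ), hg i w')‖ :=
              mul_le_mul_of_nonneg_right hdiff hφ0
          _ ≤ |C₀| * (t * ‖φ ((0 : Fin p → ℂ), hg i w')‖) := by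
              rw [mul_assoc]
              refine mul_le_mul_of_nonneg_right (le_abs_self C₀) ?_
              have ht0 : (0 : ℝ) ≤ t := le_trans (norm_nonneg _) (hle j0)
              positivity
          _ ≤ |C₀| * Bnd := mul_le_mul_of_nonneg_left htφ (abs_nonneg C₀)
    calc ‖(α i w) * φ (hg i w, hg i w')
          + (α i w' - α i w) * φ ((0 : Fin p → ℂ), hg i w')‖
        ≤ ‖(α i w) * φ (hg i w, hg i w')‖
          + ‖(α i w' - α i w) * φ ((0 : Fin p → ℂ), hg i w')‖ := norm_add_le _ _
      _ ≤ |D| * Bnd + |C₀| * Bnd := add_le_add t1 t2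
      _ = (|D| + |C₀|) * Bnd := by ring
  calc ‖∑ i, ((α i w) * φ (hg i w, hg i w')
        + (α i w' - α i w) * φ ((0 : Fin p → ℂ), hg i w'))‖
      ≤ ∑ i : Fin r, (|D| + |C₀|) * Bnd :=
        (norm_sum_le _ _).trans (Finset.sum_le_sum fun i _ => key i)
    _ = r * ((|D| + |C₀|) * Bnd) := by simp [mul_assoc]
    _ ≤ (r * (|D| + |C₀|) + 1) * Bnd := by nlinarith [abs_nonneg D, abs_nonneg C₀]
end

section
/- Let Φ : C → C⁴ be the curve Φ(t) = (t, αt, t, βt) with α ≠ β fixed complex numbers, and consider the 4 × 6 matrix D(t) = [[t, 0, αt, 0, 0, 0], [αt, t, 0, 0, 0, 0], [t, 0, βt, (α−β)t², 0, β(α−β)t²], [βt, t, 0, β(α−β)t², (α−β)t², 0]] and the vector v(t) = (t, 3αt, t, 3βt). Then v(t) does not lie in the C[[t]]-module generated by the columns of D(t); i.e., there are no power series c₁(t),...,c₆(t) with v = D·c. -/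
/-!
Every entry of `D(t)` and of `v(t)` is divisible by `t`, and `t` is a non-zero-divisor in
`ℂ[[t]]`, so `D c = v` can be divided by `t` and then reduced modulo `t`. This gives a linear
system over `ℂ` for the constant terms `x` of `c`: `x₀ + α x₂ = 1`, `α x₀ + x₁ = 3α`,
`x₀ + β x₂ = 1`, `β x₀ + x₁ = 3β`. Subtracting rows, `α ≠ β` forces `x₂ = 0` and `x₀ = 3`,
contradicting `x₀ + α x₂ = 1`.
-/

open PowerSeries Matrix

variable {R : Type*} [CommRing R]

theorem PowerSeries.constantCoeff_mulVec_of_X_smul_mulVec_eq {m n : Type*} [Fintype n]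
    {M : Matrix m n R⟦X⟧} {c : n → R⟦X⟧} {v : m → R⟦X⟧}
    (h : ((X : R⟦X⟧) • M) *ᵥ c = (X : R⟦X⟧) • v) :
    M.map (constantCoeff (R := R)) *ᵥ (constantCoeff ∘ c) = constantCoeff ∘ v := by
  rw [smul_mulVec] at h
  funext i
  rw [← RingHom.map_mulVec, Function.comp_apply,
    X_mul_cancel (congrFun h i : X * (M *ᵥ c) i = X * v i)]

/-- The coefficients of `t` in `D(t)` and `v(t)`. -/
theorem linearPart_mulVec_ne [IsDomain R] {α β : R} (hαβ : α ≠ β) (h2 : (2 : R) ≠ 0)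
    (x : Fin 6 → R) :
    !![1, 0, α, 0, 0, 0; α, 1, 0, 0, 0, 0; 1, 0, β, 0, 0, 0; β, 1, 0, 0, 0, 0] *ᵥ x ≠
      ![1, 3 * α, 1, 3 * β] := by
  intro h
  have e0 : x 0 + α * x 2 = 1 := by
    simpa [mulVec, dotProduct, Fin.sum_univ_six] using congrFun h 0
  have e1 : α * x 0 + x 1 = 3 * α := by
    simpa [mulVec, dotProduct, Fin.sum_univ_six] using congrFun h 1
  have e2 : x 0 + β * x 2 = 1 := by
    simpa [mulVec, dotProduct, Fin.sum_univ_six] using congrFun h 2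
  have e3 : β * x 0 + x 1 = 3 * β := by
    simpa [mulVec, dotProduct, Fin.sum_univ_six] using congrFun h 3
  have hαβ' : α - β ≠ 0 := sub_ne_zero.mpr hαβ
  have hx2 : x 2 = 0 := by
    refine (mul_eq_zero.mp ?_).resolve_left hαβ'
    linear_combination e0 - e2
  have hx0 : x 0 = 3 := by
    refine sub_eq_zero.mp ((mul_eq_zero.mp ?_).resolve_left hαβ')
    linear_combination e1 - e3
  exact h2 (by linear_combination e0 - hx0 - α * hx2)

/-- for `α ≠ β`, the vector `v(t) = (t, 3αt, t, 3βt)` does not lie in the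
`ℂ[[t]]`-module generated by the columns of the pulled-back doubled matrix `D(t)`. -/
theorem stmt17 (α β : ℂ) (hαβ : α ≠ β) (a b t : PowerSeries ℂ)
    (ha : a = PowerSeries.C α) (hb : b = PowerSeries.C β)
    (ht : t = PowerSeries.X) :
    ¬ ∃ c : Fin 6 → PowerSeries ℂ,
      (!![t, 0, a * t, 0, 0, 0;
          a * t, t, 0, 0, 0, 0;
          t, 0, b * t, (a - b) * t ^ 2, 0, b * (a - b) * t ^ 2;
          b * t, t, 0, b * (a - b) * t ^ 2, (a - b) * t ^ 2, 0]).mulVec c =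
        ![t, 3 * a * t, t, 3 * b * t] := by
  subst ha hb ht
  rintro ⟨c, hc⟩
  set M : Matrix (Fin 4) (Fin 6) ℂ⟦X⟧ :=
    !![1, 0, C α, 0, 0, 0; C α, 1, 0, 0, 0, 0;
      1, 0, C β, (C α - C β) * X, 0, C β * (C α - C β) * X;
      C β, 1, 0, C β * (C α - C β) * X, (C α - C β) * X, 0]
  have hM : (X : ℂ⟦X⟧) • M = !![X, 0, C α * X, 0, 0, 0; C α * X, X, 0, 0, 0, 0;
      X, 0, C β * X, (C α - C β) * X ^ 2, 0, C β * (C α - C β) * X ^ 2;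
      C β * X, X, 0, C β * (C α - C β) * X ^ 2, (C α - C β) * X ^ 2, 0] := by
    ext i j : 1; fin_cases i <;> fin_cases j <;> simp [M] <;> ring
  have hv : (X : ℂ⟦X⟧) • ![1, 3 * C α, 1, 3 * C β] = ![X, 3 * C α * X, X, 3 * C β * X] := by
    ext i : 1; fin_cases i <;> simp <;> ring
  rw [← hM, ← hv] at hc
  refine linearPart_mulVec_ne hαβ two_ne_zero (constantCoeff ∘ c) ?_
  convert constantCoeff_mulVec_of_X_smul_mulVec_eq hc using 2
  · ext i j : 1; fin_cases i <;> fin_cases j <;> simp [M]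
  · ext i : 1; fin_cases i <;> simp [map_ofNat]
end
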